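/- arXiv:2102.12389 — 3 statements merged into one kernel-verified Lean document; each statement's English description precedes it below -/
import Mathlib

section
/- Let ω be a measurable subset of ℝ^d. Then the set of points of density 1 for ω, minus the closure of the essential boundary of ω, equals the topological interior of the set of points of density 1 for ω. -/
open MeasureTheory Metric Filter Set
open scoped RealInnerProductSpace Topology ENNReal symmDiff

/-- The set of points at which the measurable set `ω` has `d`-dimensional density `t`. -/
noncomputable def densityPts {d : ℕ} (ω : Set (EuclideanSpace ℝ (Fin d))) (t : ℝ≥0∞) :
    Set (EuclideanSpace ℝ (Fin d)) :=
  {x | Filter.Tendsto (fun ρ : ℝ => volume (ω ∩ Metric.ball x ρ) / volume (Metric.ball x ρ))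
    (nhdsWithin 0 (Set.Ioi 0)) (nhds t)}

/-- `ω` has strictly positive upper `d`-dimensional density at `x`. -/
def posUpperDensity {d : ℕ} (ω : Set (EuclideanSpace ℝ (Fin d)))
    (x : EuclideanSpace ℝ (Fin d)) : Prop :=
  0 < Filter.limsup (fun ρ : ℝ => volume (ω ∩ Metric.ball x ρ) / volume (Metric.ball x ρ))
    (nhdsWithin 0 (Set.Ioi 0))

/-- The essential boundary of `ω`: points where both `ω` and its complement have
strictly positive upper density. -/
def essBoundary {d : ℕ} (ω : Set (EuclideanSpace ℝ (Fin d))) :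
    Set (EuclideanSpace ℝ (Fin d)) :=
  {x | posUpperDensity ω x ∧ posUpperDensity ωᶜ x}

/-!
If `x` has density one and the ball `B(x, r)` misses the essential boundary, every point of
`B(x, r/3)` has density `0` or `1`. A point `z` of density `0` there leads to a contradiction.
The ratio `|ω ∩ B(·, τ)| / |B(·, τ)|` is continuous in the center, so for small `τ` it equals `1/2`
somewhere on the segment `[x, z]`. Inside such a half ball both `ω` and `ωᶜ` have positive measure,
hence contain Lebesgue points of density `1` and `0`, which in turn produce a half ball of at most
half the radius nearby. The centers of the iterated half balls converge to a point at which both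
`ω` and `ωᶜ` have upper density at least `3⁻ᵈ / 2`, i.e. to a point of the essential boundary
inside `B(x, r)`.
-/

open Module (finrank)

section AddHaar

variable {E : Type*} [NormedAddCommGroup E] [NormedSpace ℝ E] [MeasurableSpace E] [BorelSpace E]
  [FiniteDimensional ℝ E] (μ : Measure E) [μ.IsAddHaarMeasure]

theorem addHaar_inter_closedBall (s : Set E) (x : E) {r : ℝ} (hr : 0 < r) :
    μ (s ∩ closedBall x r) = μ (s ∩ ball x r) := by
  refine measure_congr ((ae_eq_refl s).inter (ae_eq_of_subset_of_measure_ge ball_subset_closedBall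
    ?_ measurableSet_ball.nullMeasurableSet measure_closedBall_lt_top.ne).symm)
  rw [Measure.addHaar_closedBall μ x hr.le, Measure.addHaar_ball_of_pos μ x hr]

theorem measure_inter_ball_le_add_shell (s : Set E) (a b : E) (τ : ℝ) :
    μ (s ∩ ball a τ) ≤
      μ (s ∩ ball b τ) + (μ (ball (0 : E) (τ + dist a b)) - μ (ball (0 : E) τ)) := by
  have hcover : s ∩ ball a τ ⊆ (s ∩ ball b τ) ∪ (ball b (τ + dist a b) \ ball b τ) := by
    rintro z ⟨hzs, hza⟩
    by_cases hzb : z ∈ ball b τ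
    · exact .inl ⟨hzs, hzb⟩
    · exact .inr ⟨ball_subset_ball' le_rfl hza, hzb⟩
  calc μ (s ∩ ball a τ) ≤ μ (s ∩ ball b τ) + μ (ball b (τ + dist a b) \ ball b τ) :=
        (measure_mono hcover).trans (measure_union_le _ _)
    _ = _ := by
      rw [measure_sdiff (ball_subset_ball (le_add_of_nonneg_right dist_nonneg))
        measurableSet_ball.nullMeasurableSet measure_ball_lt_top.ne,
        Measure.addHaar_ball_center μ b, Measure.addHaar_ball_center μ b]

theorem continuous_measure_inter_ball (s : Set E) {τ : ℝ} (hτ : 0 < τ) :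
    Continuous fun y => μ (s ∩ ball y τ) := by
  refine continuous_iff_continuousAt.2 fun y₀ => ?_
  have hball : (fun y => μ (ball (0 : E) (τ + dist y y₀))) =
      fun y => ENNReal.ofReal ((τ + dist y y₀) ^ finrank ℝ E) * μ (ball 0 1) :=
    funext fun y => Measure.addHaar_ball_of_pos μ 0 (by positivity)
  have hshell : Tendsto (fun y => μ (ball (0 : E) (τ + dist y y₀)) - μ (ball (0 : E) τ))
      (𝓝 y₀) (𝓝 0) := by
    have hcont : Continuous fun y => μ (ball (0 : E) (τ + dist y y₀)) := by
      rw [hball]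
      exact (ENNReal.continuous_mul_const (measure_ball_lt_top (μ := μ)).ne).comp
        (ENNReal.continuous_ofReal.comp (by fun_prop))
    simpa using ENNReal.Tendsto.sub (hcont.tendsto y₀)
      (tendsto_const_nhds (x := μ (ball (0 : E) τ)))
      (.inr (measure_ball_lt_top (μ := μ)).ne)
  refine (ENNReal.tendsto_nhds
    ((measure_mono inter_subset_right).trans_lt (measure_ball_lt_top (μ := μ))).ne).2 fun ε hε => ?_
  filter_upwards [ENNReal.tendsto_nhds_zero.1 hshell ε hε] with y hy
  refine ⟨tsub_le_iff_right.2 ?_, ?_⟩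
  · calc μ (s ∩ ball y₀ τ) ≤ _ := measure_inter_ball_le_add_shell μ s y₀ y τ
      _ ≤ μ (s ∩ ball y τ) + ε := by rw [dist_comm]; gcongr
  · calc μ (s ∩ ball y τ) ≤ _ := measure_inter_ball_le_add_shell μ s y y₀ τ
      _ ≤ μ (s ∩ ball y₀ τ) + ε := by gcongr

end AddHaar

theorem exists_mem_closedBall_of_halving {X : Type*} [MetricSpace X] [ProperSpace X]
    (P : X → ℝ → Prop) (hP : ∀ v σ, P v σ → 0 ≤ σ)
    (hstep : ∀ v σ, P v σ → ∃ v' σ', P v' σ' ∧ σ' ≤ σ / 2 ∧ dist v' v ≤ σ)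
    {v₀ : X} {σ₀ : ℝ} (h₀ : P v₀ σ₀) :
    ∃ y ∈ closedBall v₀ (2 * σ₀), ∀ ε > 0, ∃ v σ, P v σ ∧ σ < ε ∧ y ∈ closedBall v (2 * σ) := by
  choose! V R hPVR hR hV using hstep
  let S : ℕ → X × ℝ := fun n => (fun p => (V p.1 p.2, R p.1 p.2))^[n] (v₀, σ₀)
  have hS : ∀ n, S (n + 1) = (V (S n).1 (S n).2, R (S n).1 (S n).2) := fun n =>
    Function.iterate_succ_apply' _ _ _
  have hPS : ∀ n, P (S n).1 (S n).2 := by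
    intro n
    induction n with
    | zero => exact h₀
    | succ n ih => rw [hS]; exact hPVR _ _ ih
  have hRS : ∀ n, (S n).2 ≤ σ₀ * 2⁻¹ ^ n := by
    intro n
    induction n with
    | zero => simp [S]
    | succ n ih =>
      rw [hS, pow_succ]
      linarith [hR _ _ (hPS n)]
  -- `dist vₙ₊₁ vₙ + 2σₙ₊₁ ≤ 2σₙ`, so the balls `closedBall vₙ (2σₙ)` are nested.
  obtain ⟨y, hy⟩ :=
    (isCompact_closedBall v₀ (2 * σ₀)).nonempty_iInter_of_sequence_nonempty_isCompact_isClosed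
      (fun n => closedBall (S n).1 (2 * (S n).2))
      (fun n => by
        rw [hS]
        exact closedBall_subset_closedBall' (by linarith [hR _ _ (hPS n), hV _ _ (hPS n)]))
      (fun n => nonempty_closedBall.2 (by linarith [hP _ _ (hPS n)]))
      (fun n => isClosed_closedBall)
  rw [mem_iInter] at hy
  refine ⟨y, hy 0, fun ε hε => ?_⟩
  have hlim : Tendsto (fun n : ℕ => σ₀ * 2⁻¹ ^ n) atTop (𝓝 0) := by
    simpa using (tendsto_pow_atTop_nhds_zero_of_lt_one (r := (2⁻¹ : ℝ)) (by norm_num)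
      (by norm_num)).const_mul σ₀
  obtain ⟨n, hn⟩ := (hlim.eventually (gt_mem_nhds hε)).exists
  exact ⟨_, _, hPS n, (hRS n).trans_lt hn, hy n⟩

section Density

variable {d : ℕ}

local notation "ℝᵈ" => EuclideanSpace ℝ (Fin d)

noncomputable def ballRatio (s : Set ℝᵈ) (x : ℝᵈ) (ρ : ℝ) : ℝ≥0∞ :=
  volume (s ∩ ball x ρ) / volume (ball x ρ)

variable {s ω : Set (EuclideanSpace ℝ (Fin d))}

theorem mem_densityPts_iff {x : ℝᵈ} {t : ℝ≥0∞} :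
    x ∈ densityPts s t ↔ Tendsto (ballRatio s x) (𝓝[>] 0) (𝓝 t) := Iff.rfl

theorem posUpperDensity_iff {x : ℝᵈ} : posUpperDensity s x ↔ 0 < limsup (ballRatio s x) (𝓝[>] 0) :=
  Iff.rfl

theorem ballRatio_add_compl (hs : MeasurableSet s) (x : ℝᵈ) {ρ : ℝ} (hρ : 0 < ρ) :
    ballRatio s x ρ + ballRatio sᶜ x ρ = 1 := by
  rw [ballRatio, ballRatio, ENNReal.div_add_div_same, inter_comm s, inter_comm sᶜ, ← sdiff_eq,
    measure_inter_add_sdiff _ hs, ENNReal.div_self (measure_ball_pos _ _ hρ).ne'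
    measure_ball_lt_top.ne]

theorem mem_densityPts_one_iff_compl_zero (hs : MeasurableSet s) {x : ℝᵈ} :
    x ∈ densityPts s 1 ↔ x ∈ densityPts sᶜ 0 := by
  have hsum : ∀ᶠ ρ in 𝓝[>] (0 : ℝ), ballRatio s x ρ + ballRatio sᶜ x ρ = 1 :=
    eventually_nhdsWithin_of_forall fun ρ hρ => ballRatio_add_compl hs x hρ
  have hfin : ∀ {a b : ℝ≥0∞}, a + b = 1 → a ≠ ⊤ := fun h => ne_top_of_le_ne_top ENNReal.one_ne_top
    (le_self_add.trans_eq h)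
  rw [mem_densityPts_iff, mem_densityPts_iff]
  constructor <;> intro h
  · have := ENNReal.Tendsto.sub tendsto_const_nhds h (.inl ENNReal.one_ne_top)
    refine Tendsto.congr' ?_ (by simpa using this)
    filter_upwards [hsum] with ρ hρ
    exact ENNReal.sub_eq_of_eq_add (hfin hρ) (by rw [← hρ, add_comm])
  · have := ENNReal.Tendsto.sub tendsto_const_nhds h (.inl ENNReal.one_ne_top)
    refine Tendsto.congr' ?_ (by simpa using this)
    filter_upwards [hsum] with ρ hρ
    exact ENNReal.sub_eq_of_eq_add (hfin ((add_comm _ _).trans hρ)) hρ.symm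

theorem mem_densityPts_zero_of_not_posUpperDensity {x : ℝᵈ} (h : ¬ posUpperDensity s x) :
    x ∈ densityPts s 0 :=
  tendsto_of_le_liminf_of_limsup_le zero_le (not_lt.1 h)

theorem not_posUpperDensity_of_mem_densityPts_zero {x : ℝᵈ} (h : x ∈ densityPts s 0) :
    ¬ posUpperDensity s x := by
  rw [posUpperDensity_iff, (mem_densityPts_iff.1 h).limsup_eq]
  exact lt_irrefl 0

theorem mem_densityPts_zero_or_one_of_notMem_essBoundary (hω : MeasurableSet ω) {x : ℝᵈ}
    (hx : x ∉ essBoundary ω) : x ∈ densityPts ω 0 ∨ x ∈ densityPts ω 1 := by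
  by_cases h : posUpperDensity ω x
  · exact .inr ((mem_densityPts_one_iff_compl_zero hω).2
      (mem_densityPts_zero_of_not_posUpperDensity fun hc => hx ⟨h, hc⟩))
  · exact .inl (mem_densityPts_zero_of_not_posUpperDensity h)

theorem disjoint_densityPts_one_essBoundary (hω : MeasurableSet ω) :
    Disjoint (densityPts ω 1) (essBoundary ω) :=
  disjoint_left.2 fun _ hx hb =>
    not_posUpperDensity_of_mem_densityPts_zero ((mem_densityPts_one_iff_compl_zero hω).1 hx) hb.2

theorem ae_mem_densityPts_one (s : Set ℝᵈ) : ∀ᵐ x ∂volume.restrict s, x ∈ densityPts s 1 := by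
  filter_upwards [Besicovitch.ae_tendsto_measure_inter_div volume s] with x hx
  refine hx.congr' ?_
  filter_upwards [self_mem_nhdsWithin] with ρ (hρ : 0 < ρ)
  rw [addHaar_inter_closedBall volume s x hρ, ← univ_inter (closedBall x ρ),
    addHaar_inter_closedBall volume univ x hρ, univ_inter]

theorem exists_mem_densityPts_one_of_measure_ne_zero {t : Set ℝᵈ} (ht : MeasurableSet t)
    (h : volume (s ∩ t) ≠ 0) : ∃ x ∈ t, x ∈ densityPts s 1 := by
  have : (ae (volume.restrict (s ∩ t))).NeBot := ae_neBot.2 (Measure.restrict_eq_zero.not.2 h)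
  have hmem : ∀ᵐ x ∂volume.restrict (s ∩ t), x ∈ t :=
    ae_restrict_of_ae_restrict_of_subset inter_subset_right (ae_restrict_mem ht)
  exact (hmem.and (ae_restrict_of_ae_restrict_of_subset inter_subset_left
    (ae_mem_densityPts_one s))).exists

theorem continuous_ballRatio (s : Set ℝᵈ) {τ : ℝ} (hτ : 0 < τ) :
    Continuous fun y => ballRatio s y τ := by
  simp only [ballRatio, Measure.addHaar_ball_center volume _ τ]
  exact (ENNReal.continuous_div_const _ (measure_ball_pos _ _ hτ).ne').comp
    (continuous_measure_inter_ball volume s hτ)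

theorem ballRatio_le_mul_ballRatio {v y : ℝᵈ} {σ k : ℝ} (hk : 0 < k)
    (hsub : ball v σ ⊆ ball y (k * σ)) :
    ballRatio s v σ ≤ ENNReal.ofReal (k ^ d) * ballRatio s y (k * σ) := by
  have hK : ENNReal.ofReal (k ^ d) ≠ 0 := by simp [hk]
  have hB : volume (ball y (k * σ)) = ENNReal.ofReal (k ^ d) * volume (ball v σ) := by
    rw [Measure.addHaar_ball_mul_of_pos volume y hk, finrank_euclideanSpace_fin,
      Measure.addHaar_ball_center volume v]
  rw [ballRatio, ballRatio, hB, ← mul_div_assoc,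
    ← ENNReal.mul_div_mul_left _ _ hK ENNReal.ofReal_ne_top]
  gcongr

theorem posUpperDensity_of_frequently_le {x : ℝᵈ} {c : ℝ≥0∞} (hc : 0 < c)
    (h : ∃ᶠ ρ in 𝓝[>] 0, c ≤ ballRatio s x ρ) : posUpperDensity s x :=
  hc.trans_le (le_limsup_of_frequently_le h)

def IsHalfBall (s : Set ℝᵈ) (v : ℝᵈ) (σ : ℝ) : Prop :=
  0 < σ ∧ ballRatio s v σ = 2⁻¹

theorem exists_isHalfBall_of_mem_densityPts {w u : ℝᵈ} (hw : w ∈ densityPts s 1)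
    (hu : u ∈ densityPts s 0) {ε : ℝ} (hε : 0 < ε) :
    ∃ v ∈ segment ℝ w u, ∃ σ ≤ ε, IsHalfBall s v σ := by
  have hw' := hw.eventually (lt_mem_nhds (by norm_num : (2⁻¹ : ℝ≥0∞) < 1))
  have hu' := hu.eventually (gt_mem_nhds (by norm_num : (0 : ℝ≥0∞) < 2⁻¹))
  obtain ⟨τ, ⟨hτw, hτu⟩, hτ⟩ := ((hw'.and hu').and (Ioo_mem_nhdsGT hε)).exists
  obtain ⟨v, hv, hv'⟩ := (convex_segment w u).isPreconnected.intermediate_value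
    (right_mem_segment ℝ w u) (left_mem_segment ℝ w u) (continuous_ballRatio s hτ.1).continuousOn
    ⟨hτu.le, hτw.le⟩
  exact ⟨v, hv, τ, hτ.2.le, hτ.1, hv'⟩

namespace IsHalfBall

variable {v : EuclideanSpace ℝ (Fin d)} {σ : ℝ}

theorem compl (hs : MeasurableSet s) (h : IsHalfBall s v σ) : IsHalfBall sᶜ v σ := by
  refine ⟨h.1, ?_⟩
  have := ballRatio_add_compl hs v h.1
  rw [h.2, ← ENNReal.inv_two_add_inv_two] at this
  exact (ENNReal.add_right_inj (by simp)).1 this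

theorem measure_inter_ne_zero (h : IsHalfBall s v σ) : volume (s ∩ ball v σ) ≠ 0 := by
  intro h0
  have := h.2
  rw [ballRatio, h0, ENNReal.zero_div] at this
  exact ENNReal.inv_ne_zero.2 ENNReal.ofNat_ne_top this.symm

theorem exists_isHalfBall (hω : MeasurableSet ω) (h : IsHalfBall ω v σ) :
    ∃ v' σ', IsHalfBall ω v' σ' ∧ σ' ≤ σ / 2 ∧ dist v' v ≤ σ := by
  obtain ⟨w, hwB, hw⟩ :=
    exists_mem_densityPts_one_of_measure_ne_zero measurableSet_ball h.measure_inter_ne_zero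
  obtain ⟨u, huB, hu⟩ := exists_mem_densityPts_one_of_measure_ne_zero measurableSet_ball
    (h.compl hω).measure_inter_ne_zero
  have hu0 : u ∈ densityPts ω 0 := by
    simpa using (mem_densityPts_one_iff_compl_zero hω.compl).1 hu
  obtain ⟨v', hv', σ', hσ', h'⟩ := exists_isHalfBall_of_mem_densityPts hw hu0 (half_pos h.1)
  exact ⟨v', σ', h', hσ', (mem_ball.1 ((convex_ball v σ).segment_subset hwB huB hv')).le⟩

theorem exists_mem_essBoundary (hω : MeasurableSet ω) (h : IsHalfBall ω v σ) :
    ∃ y ∈ essBoundary ω, dist y v ≤ 2 * σ := by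
  obtain ⟨y, hyv, hy⟩ := exists_mem_closedBall_of_halving (IsHalfBall ω) (fun _ _ h => h.1.le)
    (fun _ _ h => h.exists_isHalfBall hω) h
  have hpos : ∀ s : Set ℝᵈ, (∀ v σ, IsHalfBall ω v σ → IsHalfBall s v σ) →
      posUpperDensity s y := by
    intro s hs
    refine posUpperDensity_of_frequently_le (c := 2⁻¹ / ENNReal.ofReal (3 ^ d))
      (ENNReal.div_pos (by norm_num) ENNReal.ofReal_ne_top) ?_
    refine (nhdsGT_basis 0).frequently_iff.2 fun ε hε => ?_
    obtain ⟨v, σ, hvσ, hσε, hyv⟩ := hy (ε / 3) (by positivity)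
    have hσ := hvσ.1
    have hsub : ball v σ ⊆ ball y (3 * σ) := fun z hz => by
      rw [mem_closedBall, dist_comm] at hyv
      exact mem_ball.2 (by linarith [dist_triangle z v y, mem_ball.1 hz])
    refine ⟨3 * σ, ⟨by positivity, by linarith⟩, ENNReal.div_le_of_le_mul' ?_⟩
    exact (hs v σ hvσ).2 ▸ ballRatio_le_mul_ballRatio three_pos hsub
  exact ⟨y, ⟨hpos ω fun _ _ h => h, hpos ωᶜ fun _ _ h => h.compl hω⟩, mem_closedBall.1 hyv⟩

end IsHalfBall

theorem ball_subset_densityPts_one (hω : MeasurableSet ω) {x : ℝᵈ} (hx : x ∈ densityPts ω 1) {r : ℝ}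
    (hr : Disjoint (ball x r) (essBoundary ω)) : ball x (r / 3) ⊆ densityPts ω 1 := by
  intro z hz
  have hr3 : 0 < r / 3 := pos_of_mem_ball hz
  refine (mem_densityPts_zero_or_one_of_notMem_essBoundary hω
    (disjoint_left.1 hr (ball_subset_ball (by linarith) hz))).resolve_left fun hz0 => ?_
  obtain ⟨v, hv, σ, hσ, hhalf⟩ := exists_isHalfBall_of_mem_densityPts hx hz0 hr3
  obtain ⟨y, hy, hyv⟩ := hhalf.exists_mem_essBoundary hω
  have hvx : dist v x < r / 3 :=
    mem_ball.1 ((convex_ball x _).segment_subset (mem_ball_self hr3) hz hv)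
  exact disjoint_left.1 hr (mem_ball.2 (by linarith [dist_triangle y v x])) hy

end Density

/-- The set of density-1 points of `ω` minus the closure of the essential boundary equals
the interior of the set of density-1 points. -/
theorem stmt0 {d : ℕ} (ω : Set (EuclideanSpace ℝ (Fin d))) (hω : MeasurableSet ω) :
    densityPts ω 1 \ closure (essBoundary ω) = interior (densityPts ω 1) := by
  ext x
  constructor
  · rintro ⟨hx, hxcl⟩
    obtain ⟨r, hr, hball⟩ := Metric.isOpen_iff.1 isClosed_closure.isOpen_compl x hxcl
    have hdisj : Disjoint (ball x r) (essBoundary ω) :=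
      (subset_compl_iff_disjoint_right.1 hball).mono_right subset_closure
    exact mem_interior_iff_mem_nhds.2
      (Metric.mem_nhds_iff.2 ⟨r / 3, by positivity, ball_subset_densityPts_one hω hx hdisj⟩)
  · intro hx
    exact ⟨interior_subset hx, disjoint_left.1 (((disjoint_densityPts_one_essBoundary hω).mono_left
      interior_subset).closure_right isOpen_interior) hx⟩
end

section
/- Let H_1, …, H_d be hyperplanes in ℝ^d through the origin whose unit normals are linearly independent, and extend them to a d-periodic sequence H_n (H_{n+d} = H_n). For any starting point x_0 ∈ ℝ^d, define x_n as the orthogonal projection of x_{n-1} onto H_n. Then the sequence (x_n) converges to the origin (the unique common point of all the hyperplanes). -/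
open Filter Set
open scoped RealInnerProductSpace Topology

/-!
Projecting `y` onto the hyperplane `uᗮ` removes the component `⟪y, u⟫ u`, so by Pythagoras
`‖x (n+1)‖² = ‖x n‖² - ⟪x n, u n⟫²`. The norms decrease to a limit, hence the step sizes
`|⟪x n, u n⟫| = ‖x (n+1) - x n‖` tend to `0`. Every normal `ν j` recurs within any `d`
consecutive steps, so `⟪x m, ν j⟫` differs from a step size by at most `d` further step sizes
and also tends to `0`. Since the `ν j` span the space, the inner products with them determine
a vector continuously, and `x m → 0`.
-/

section

variable {E : Type*} [NormedAddCommGroup E] [InnerProductSpace ℝ E]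

theorem norm_sub_inner_smul_sq_add_inner_sq {u : E} (hu : ‖u‖ = 1) (y : E) :
    ‖y - ⟪y, u⟫ • u‖ ^ 2 + ⟪y, u⟫ ^ 2 = ‖y‖ ^ 2 := by
  rw [norm_sub_sq_real, real_inner_smul_right, norm_smul, hu, Real.norm_eq_abs, mul_one, sq_abs]
  ring

theorem tendsto_zero_of_tendsto_inner_of_span_eq_top [FiniteDimensional ℝ E] {ι α : Type*}
    {v : ι → E} (hv : Submodule.span ℝ (range v) = ⊤) {x : α → E} {l : Filter α}
    (h : ∀ i, Tendsto (fun a => ⟪x a, v i⟫) l (𝓝 0)) : Tendsto x l (𝓝 0) := by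
  let T : E →ₗ[ℝ] ι → ℝ := LinearMap.pi fun i => innerₛₗ ℝ (v i)
  have hT : LinearMap.ker T = ⊥ := by
    refine LinearMap.ker_eq_bot'.mpr fun y hy => inner_self_eq_zero (𝕜 := ℝ) |>.mp ?_
    have h_orth : innerₛₗ ℝ y = 0 :=
      LinearMap.ext_on_range hv fun i => by simpa [T, real_inner_comm] using congrFun hy i
    exact LinearMap.congr_fun h_orth y
  rw [(LinearMap.isClosedEmbedding_of_injective hT).isEmbedding.tendsto_nhds_iff, map_zero,
    tendsto_pi_nhds]
  intro i
  simpa [T, real_inner_comm] using h i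

end

namespace CyclicProjection

variable {E : Type*} [NormedAddCommGroup E] [InnerProductSpace ℝ E] {u x : ℕ → E}

theorem norm_succ_sub (hu : ∀ n, ‖u n‖ = 1)
    (hx : ∀ n, x (n + 1) = x n - ⟪x n, u n⟫ • u n) (n : ℕ) :
    ‖x (n + 1) - x n‖ = |⟪x n, u n⟫| := by
  rw [hx, sub_sub_cancel_left, norm_neg, norm_smul, hu, mul_one, Real.norm_eq_abs]

theorem tendsto_inner_zero (hu : ∀ n, ‖u n‖ = 1)
    (hx : ∀ n, x (n + 1) = x n - ⟪x n, u n⟫ • u n) :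
    Tendsto (fun n => ⟪x n, u n⟫) atTop (𝓝 0) := by
  have hpyth (n : ℕ) : ‖x (n + 1)‖ ^ 2 + ⟪x n, u n⟫ ^ 2 = ‖x n‖ ^ 2 := by
    rw [hx]; exact norm_sub_inner_smul_sq_add_inner_sq (hu n) (x n)
  have hanti : Antitone fun n => ‖x n‖ ^ 2 :=
    antitone_nat_of_succ_le fun n => by nlinarith [hpyth n, sq_nonneg ⟪x n, u n⟫]
  have hlim := tendsto_atTop_ciInf hanti ⟨0, by rintro _ ⟨n, rfl⟩; positivity⟩
  have hsq : Tendsto (fun n => ⟪x n, u n⟫ ^ 2) atTop (𝓝 0) := by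
    have := hlim.sub (hlim.comp (tendsto_add_atTop_nat 1))
    rw [sub_self] at this
    refine this.congr fun n => ?_
    simp only [Function.comp_apply, ← hpyth n]
    ring
  have habs : Tendsto (fun n => |⟪x n, u n⟫|) atTop (𝓝 0) := by
    simpa [Real.sqrt_sq_eq_abs] using hsq.sqrt
  exact tendsto_zero_iff_abs_tendsto_zero _ |>.mpr habs

theorem abs_inner_le_sum {v : E} {m k N : ℕ} (hk : k < N) (hv : u (m + k) = v)
    (hu : ∀ n, ‖u n‖ = 1) (hx : ∀ n, x (n + 1) = x n - ⟪x n, u n⟫ • u n) :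
    |⟪x m, v⟫| ≤ ∑ l ∈ Finset.range N, |⟪x (m + l), u (m + l)⟫| := by
  have hdist : ‖x m - x (m + k)‖ ≤ ∑ l ∈ Finset.range k, |⟪x (m + l), u (m + l)⟫| := by
    have hstep (l : ℕ) : dist (x (m + l)) (x (m + (l + 1))) = |⟪x (m + l), u (m + l)⟫| := by
      rw [dist_comm, dist_eq_norm, ← add_assoc, norm_succ_sub hu hx]
    simpa only [← dist_eq_norm, hstep, add_zero] using
      dist_le_range_sum_dist (fun l => x (m + l)) k
  calc |⟪x m, v⟫| = |⟪x m - x (m + k), v⟫ + ⟪x (m + k), u (m + k)⟫| := by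
        rw [hv, inner_sub_left, sub_add_cancel]
    _ ≤ ‖x m - x (m + k)‖ + |⟪x (m + k), u (m + k)⟫| := by
        grw [abs_add_le, abs_real_inner_le_norm, ← hv, hu, mul_one]
    _ ≤ ∑ l ∈ Finset.range (k + 1), |⟪x (m + l), u (m + l)⟫| := by
        rw [Finset.sum_range_succ]; gcongr
    _ ≤ ∑ l ∈ Finset.range N, |⟪x (m + l), u (m + l)⟫| :=
        Finset.sum_le_sum_of_subset_of_nonneg (Finset.range_subset_range.mpr hk)
          fun _ _ _ => abs_nonneg _

theorem tendsto_inner_zero_of_recurrent {v : E} {N : ℕ} (hrec : ∀ m, ∃ k < N, u (m + k) = v)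
    (hu : ∀ n, ‖u n‖ = 1) (hx : ∀ n, x (n + 1) = x n - ⟪x n, u n⟫ • u n) :
    Tendsto (fun m => ⟪x m, v⟫) atTop (𝓝 0) := by
  have hsum : Tendsto (fun m => ∑ l ∈ Finset.range N, |⟪x (m + l), u (m + l)⟫|) atTop (𝓝 0) := by
    simpa using tendsto_finsetSum _ fun l _ =>
      ((tendsto_inner_zero hu hx).comp (tendsto_add_atTop_nat l)).abs
  refine squeeze_zero_norm (fun m => ?_) hsum
  obtain ⟨k, hk, hv⟩ := hrec m
  exact abs_inner_le_sum hk hv hu hx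

end CyclicProjection

theorem Nat.exists_lt_add_add_one_mod_eq {d j : ℕ} (hj : j < d) (m : ℕ) :
    ∃ k < d, (m + k + 1) % d = j := by
  have hd : 0 < d := by omega
  set r := (m + 1) % d
  have hr : r < d := Nat.mod_lt _ hd
  refine ⟨(j + (d - r)) % d, Nat.mod_lt _ hd, ?_⟩
  rw [add_right_comm, ← Nat.mod_add_mod, Nat.add_mod_mod,
    show r + (j + (d - r)) = j + d by omega, Nat.add_mod_right, Nat.mod_eq_of_lt hj]

/-- Iterated orthogonal projections onto `d` hyperplanes through the origin, repeated
cyclically, whose unit normals are linearly independent, converge to the origin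
(the unique common point of the hyperplanes). -/
theorem stmt3 {d : ℕ} (hd : 0 < d) (ν : Fin d → EuclideanSpace ℝ (Fin d))
    (hunit : ∀ i, ‖ν i‖ = 1) (hli : LinearIndependent ℝ ν)
    (x : ℕ → EuclideanSpace ℝ (Fin d))
    (hx : ∀ n : ℕ, x (n + 1) =
      x n - ⟪x n, ν ⟨(n + 1) % d, Nat.mod_lt _ hd⟩⟫ • ν ⟨(n + 1) % d, Nat.mod_lt _ hd⟩) :
    Filter.Tendsto x Filter.atTop (nhds 0) := by
  have hspan : Submodule.span ℝ (range ν) = ⊤ :=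
    hli.span_eq_top_of_card_eq_finrank' (by simp)
  refine tendsto_zero_of_tendsto_inner_of_span_eq_top hspan fun j => ?_
  refine CyclicProjection.tendsto_inner_zero_of_recurrent (N := d)
    (u := fun n => ν ⟨(n + 1) % d, Nat.mod_lt _ hd⟩) (fun m => ?_) (fun n => hunit _) hx
  obtain ⟨k, hk, hmod⟩ := Nat.exists_lt_add_add_one_mod_eq j.isLt m
  exact ⟨k, hk, congrArg ν (Fin.ext (by simpa [add_assoc] using hmod))⟩
end

section
/- Let Ω ⊂ ℝ^d be a measurable set with finite Lebesgue measure which is r-critical for some r > 0 (with constant c > 0). Then Ω is essentially bounded, i.e., there exists R > 0 with |Ω \ B_R(0)| = 0. -/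
open MeasureTheory Metric Filter Set
open scoped RealInnerProductSpace Topology ENNReal symmDiff

/-!
A point of the essential boundary carries `Ω`-mass `c` within distance `r`, so a `2r`-separated
family of such points has at most `|Ω| / c` members: the essential boundary is bounded. Far away
from it, a ball large enough to have more volume than `Ω` cannot lie essentially inside `Ω`; if
it met `Ω` in positive measure it would contain a point of the essential boundary. Indeed, between
a Lebesgue point of `Ω` and one of `Ωᶜ` the continuity of `z ↦ |Ω ∩ B(z, t)|` yields a ball
half filled by `Ω`; iterating inside it gives nested half-filled balls shrinking to a point at which
both `Ω` and `Ωᶜ` have upper density at least `2^-(d+1)`.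
-/

open Bornology Module

section Packing

variable {X : Type*} [PseudoMetricSpace X]

theorem exists_seq_mem_pairwise_disjoint_ball {S : Set X} (hS : ¬IsBounded S) {r : ℝ}
    (hr : 0 ≤ r) :
    ∃ x : ℕ → X, (∀ n, x n ∈ S) ∧ Pairwise (Function.onFun Disjoint fun n => ball (x n) r) := by
  obtain ⟨x₀, -⟩ : S.Nonempty := nonempty_iff_ne_empty.2 fun h => hS (h ▸ isBounded_empty)
  have hfar : ∀ R : ℝ, ∃ x ∈ S, R < dist x x₀ := by
    by_contra! h
    obtain ⟨R, hR⟩ := h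
    exact hS ((isBounded_iff_subset_closedBall x₀).2 ⟨R, fun x hx => hR x hx⟩)
  choose! next hnextS hnext using fun x : X => hfar (dist x x₀ + 2 * r)
  set x : ℕ → X := fun n => next^[n + 1] x₀
  have hstep : ∀ n, dist (x n) x₀ + 2 * r < dist (x (n + 1)) x₀ := fun n => by
    simp only [x, Function.iterate_succ_apply' next (n + 1)]
    exact hnext _
  have hmono : StrictMono fun n => dist (x n) x₀ :=
    strictMono_nat_of_lt_succ fun n => by linarith [hstep n]
  refine ⟨x, fun n => by simp only [x, Function.iterate_succ_apply']; exact hnextS _, ?_⟩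
  refine (pairwise_disjoint_on _).2 fun m n hmn => ball_disjoint_ball ?_
  have hgap : dist (x m) x₀ + 2 * r ≤ dist (x n) x₀ :=
    (hstep m).le.trans (hmono.monotone (Nat.succ_le_of_lt hmn))
  linarith [dist_triangle_left (x n) x₀ (x m)]

theorem isBounded_of_le_measure_inter_ball [MeasurableSpace X] [OpensMeasurableSpace X]
    {μ : Measure X} {Ω S : Set X} (hΩ : MeasurableSet Ω) (hfin : μ Ω ≠ ∞) {r : ℝ} (hr : 0 ≤ r)
    {c : ℝ≥0∞} (hc : c ≠ 0) (h : ∀ x ∈ S, c ≤ μ (Ω ∩ ball x r)) : IsBounded S := by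
  by_contra hS
  obtain ⟨x, hxS, hdisj⟩ := exists_seq_mem_pairwise_disjoint_ball hS hr
  have hfinite := Measure.finite_const_le_meas_of_disjoint_iUnion μ (pos_iff_ne_zero.2 hc)
    (fun n => hΩ.inter measurableSet_ball)
    (hdisj.mono fun _ _ h => h.mono inter_subset_right inter_subset_right)
    (ne_top_of_le_ne_top hfin (measure_mono (iUnion_subset fun _ => inter_subset_left)))
  exact infinite_univ (hfinite.subset fun n _ => h _ (hxS n))

theorem exists_mem_forall_measure_inter_ball_ne_zero [HereditarilyLindelofSpace X]
    [MeasurableSpace X] [OpensMeasurableSpace X] {μ : Measure X} {Ω T : Set X}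
    (h : μ (Ω ∩ T) ≠ 0) : ∃ p ∈ T, ∀ ρ > 0, μ (Ω ∩ ball p ρ) ≠ 0 := by
  have hT : 0 < μ.restrict Ω T :=
    (pos_iff_ne_zero.2 (by rwa [inter_comm] at h)).trans_le (Measure.le_restrict_apply _ _)
  obtain ⟨p, hpT, hp⟩ := Measure.nonempty_inter_support_of_pos hT
  refine ⟨p, hpT, fun ρ hρ => ?_⟩
  have := (Measure.mem_support_iff_forall p).1 hp _ (ball_mem_nhds p hρ)
  rw [Measure.restrict_apply measurableSet_ball, inter_comm] at this
  exact this.ne'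

end Packing

theorem measure_inter_add_compl_inter {α : Type*} [MeasurableSpace α] (μ : Measure α)
    {s : Set α} (hs : MeasurableSet s) (t : Set α) : μ (s ∩ t) + μ (sᶜ ∩ t) = μ t := by
  rw [← sdiff_eq_compl_inter, inter_comm]
  exact measure_inter_add_sdiff t hs

section AddHaar

variable {E : Type*} [NormedAddCommGroup E] [NormedSpace ℝ E] [FiniteDimensional ℝ E]
  [MeasurableSpace E] [BorelSpace E] (μ : Measure E) [μ.IsAddHaarMeasure] {Ω : Set E}

theorem addHaar_closedBall_ae_eq_ball (x : E) {r : ℝ} (hr : r ≠ 0) :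
    closedBall x r =ᵐ[μ] ball x r :=
  ae_eq_set.2 ⟨by rw [closedBall_sdiff_ball]; exact Measure.addHaar_sphere_of_ne_zero μ x hr,
    by rw [sdiff_eq_empty.2 ball_subset_closedBall, measure_empty]⟩

theorem ae_tendsto_measure_inter_ball_div (hΩ : MeasurableSet Ω) :
    ∀ᵐ x ∂μ, Tendsto (fun ρ => μ (Ω ∩ ball x ρ) / μ (ball x ρ)) (𝓝[>] 0)
      (𝓝 (Ω.indicator 1 x)) := by
  filter_upwards [Besicovitch.ae_tendsto_measure_inter_div_of_measurableSet μ hΩ] with x hx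
  refine hx.congr' ?_
  filter_upwards [self_mem_nhdsWithin] with ρ (hρ : 0 < ρ)
  have h := addHaar_closedBall_ae_eq_ball μ x hρ.ne'
  rw [measure_congr ((ae_eq_refl Ω).inter h), measure_congr h]

theorem continuous_measure_inter_ball_s11 (hΩ : MeasurableSet Ω) {t : ℝ} (ht : t ≠ 0) :
    Continuous fun z => μ (Ω ∩ ball z t) := by
  refine continuous_iff_continuousAt.2 fun z₀ => ?_
  refine tendsto_measure_of_ae_tendsto_indicator (𝓝 z₀) (hΩ.inter measurableSet_ball)
    (fun _ => hΩ.inter measurableSet_ball) (B := ball z₀ (t + 1)) measurableSet_ball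
    measure_ball_lt_top.ne ?_ ?_
  · filter_upwards [ball_mem_nhds z₀ one_pos] with z hz
    exact inter_subset_right.trans (ball_subset_ball' (by rw [mem_ball] at hz; linarith))
  · filter_upwards [measure_eq_zero_iff_ae_notMem.1
      (Measure.addHaar_sphere_of_ne_zero μ z₀ ht)] with x hx
    have hdist : ContinuousAt (fun z => dist x z) z₀ :=
      (continuous_const.dist continuous_id).continuousAt
    rcases lt_or_gt_of_ne (show dist x z₀ ≠ t from hx) with h | h
    · filter_upwards [hdist.eventually_lt continuousAt_const h] with z hz
      simp only [mem_inter_iff, mem_ball, hz, h]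
    · filter_upwards [continuousAt_const.eventually_lt hdist h] with z hz
      simp only [mem_inter_iff, mem_ball, hz.not_gt, h.not_gt]

theorem exists_closedBall_subset_measure_eq_half (hΩ : MeasurableSet Ω) {x : E} {s t₀ : ℝ}
    (ht₀ : 0 < t₀) (h₁ : μ (Ω ∩ ball x s) ≠ 0) (h₂ : μ (Ωᶜ ∩ ball x s) ≠ 0) :
    ∃ y t, 0 < t ∧ t ≤ t₀ ∧ closedBall y t ⊆ ball x s ∧
      μ (ball y t) = 2 * μ (Ω ∩ ball y t) ∧ μ (ball y t) = 2 * μ (Ωᶜ ∩ ball y t) := by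
  have hae := ae_tendsto_measure_inter_ball_div μ hΩ
  obtain ⟨p, ⟨hpΩ, hpx⟩, hp⟩ :=
    Measure.exists_mem_of_measure_ne_zero_of_ae h₁ (ae_restrict_of_ae hae)
  obtain ⟨q, ⟨hqΩ, hqx⟩, hq⟩ :=
    Measure.exists_mem_of_measure_ne_zero_of_ae h₂ (ae_restrict_of_ae hae)
  rw [indicator_of_mem hpΩ, Pi.one_apply] at hp
  rw [indicator_of_notMem hqΩ] at hq
  set s' := max (dist p x) (dist q x)
  have hs' : s' < s := max_lt hpx hqx
  -- at scale `t`, `Ω` fills more than half of `B(p, t)`, less than half of `B(q, t)`, and the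
  -- balls `B(z, t)` with `z ∈ [p, q]` stay inside `B(x, s)`
  obtain ⟨t, ⟨⟨hpt, hqt⟩, hts⟩, ht⟩ :=
    (((hp.eventually (lt_mem_nhds (ENNReal.inv_lt_one.2 ENNReal.one_lt_two))).and
      (hq.eventually (gt_mem_nhds (ENNReal.inv_pos.2 (ENNReal.ofNat_ne_top (n := 2)))))).and
      (eventually_nhdsWithin_of_eventually_nhds
        (gt_mem_nhds (lt_min ht₀ (sub_pos.2 hs'))))).and self_mem_nhdsWithin |>.exists
  set f := fun z => μ (Ω ∩ ball z t)
  set m := μ (ball (0 : E) t)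
  have hball : ∀ z, μ (ball z t) = m := fun z => Measure.addHaar_ball_center μ z t
  have hm₀ : m ≠ 0 := (measure_ball_pos μ 0 ht).ne'
  have hm : m ≠ ∞ := measure_ball_lt_top.ne
  rw [hball, ENNReal.lt_div_iff_mul_lt (.inl hm₀) (.inl hm)] at hpt
  rw [hball, ENNReal.div_lt_iff (.inl hm₀) (.inl hm)] at hqt
  set γ := AffineMap.lineMap (k := ℝ) p q
  have hγ : ContinuousOn (f ∘ γ) (Icc 0 1) :=
    ((continuous_measure_inter_ball_s11 μ hΩ ht.ne').comp AffineMap.lineMap_continuous).continuousOn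
  obtain ⟨a, ha, hfa⟩ := intermediate_value_Icc' zero_le_one hγ
    ⟨by simpa [γ] using hqt.le, by simpa [γ] using hpt.le⟩
  have hyx : γ a ∈ closedBall x s' := (convex_closedBall x s').lineMap_mem
    (mem_closedBall.2 (le_max_left _ _)) (mem_closedBall.2 (le_max_right _ _)) ha
  have hhalf : μ (Ω ∩ ball (γ a) t) = 2⁻¹ * m := hfa
  have hhalf_compl : μ (Ωᶜ ∩ ball (γ a) t) = 2⁻¹ * m := by
    have hm_eq : m = 2⁻¹ * m + 2⁻¹ * m := by
      rw [← add_mul, ENNReal.inv_two_add_inv_two, one_mul]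
    refine (ENNReal.add_right_inj (a := 2⁻¹ * m) (ENNReal.mul_ne_top (by simp) hm)).1 ?_
    rw [← hm_eq, ← hhalf, ← hball (γ a)]
    exact measure_inter_add_compl_inter μ hΩ _
  have htwice : 2 * (2⁻¹ * m) = m :=
    ENNReal.mul_inv_cancel_left two_ne_zero ENNReal.ofNat_ne_top
  refine ⟨γ a, t, ht, hts.le.trans (min_le_left _ _), closedBall_subset_ball' ?_, ?_, ?_⟩
  · linarith [mem_closedBall.1 hyx, min_le_right t₀ (s - s')]
  · rw [hball, hhalf, htwice]
  · rw [hball, hhalf_compl, htwice]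

theorem measure_ball_two_mul_le (A : Set E) {c z : E} {t : ℝ}
    (hz : z ∈ closedBall c t) (h : μ (ball c t) ≤ 2 * μ (A ∩ ball c t)) :
    μ (ball z (2 * t)) ≤ 2 ^ (finrank ℝ E + 1) * μ (A ∩ ball z (2 * t)) :=
  calc μ (ball z (2 * t)) = 2 ^ finrank ℝ E * μ (ball c t) := by
        rw [Measure.addHaar_ball_mul_of_pos μ z two_pos, Measure.addHaar_ball_center μ c,
          ENNReal.ofReal_pow zero_le_two, ENNReal.ofReal_ofNat]
    _ ≤ 2 ^ finrank ℝ E * (2 * μ (A ∩ ball c t)) := by gcongr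
    _ ≤ 2 ^ finrank ℝ E * (2 * μ (A ∩ ball z (2 * t))) := by
        gcongr
        exact ball_subset_ball' (by rw [dist_comm]; linarith [mem_closedBall.1 hz])
    _ = 2 ^ (finrank ℝ E + 1) * μ (A ∩ ball z (2 * t)) := by ring

theorem exists_mem_ball_seq_two_sided_density_bound (hΩ : MeasurableSet Ω) {x : E} {s : ℝ}
    (h₁ : μ (Ω ∩ ball x s) ≠ 0) (h₂ : μ (Ωᶜ ∩ ball x s) ≠ 0) :
    ∃ y ∈ ball x s, ∃ τ : ℕ → ℝ, Tendsto τ atTop (𝓝[>] 0) ∧ ∀ n,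
      μ (ball y (τ n)) ≤ 2 ^ (finrank ℝ E + 1) * μ (Ω ∩ ball y (τ n)) ∧
      μ (ball y (τ n)) ≤ 2 ^ (finrank ℝ E + 1) * μ (Ωᶜ ∩ ball y (τ n)) := by
  set P : E × ℝ → Prop := fun w => 0 < w.2 ∧ μ (ball w.1 w.2) = 2 * μ (Ω ∩ ball w.1 w.2) ∧
    μ (ball w.1 w.2) = 2 * μ (Ωᶜ ∩ ball w.1 w.2)
  have step : ∀ w, P w →
      ∃ w', P w' ∧ w'.2 ≤ w.2 / 2 ∧ closedBall w'.1 w'.2 ⊆ ball w.1 w.2 := by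
    rintro ⟨c, t⟩ ⟨ht, hΩc, hΩcc⟩
    have hpos : μ (ball c t) ≠ 0 := (measure_ball_pos μ c ht).ne'
    obtain ⟨c', t', ht', ht't, hsub, h'⟩ := exists_closedBall_subset_measure_eq_half μ hΩ
      (half_pos ht) (fun h0 => hpos (by rw [hΩc, h0, mul_zero]))
      (fun h0 => hpos (by rw [hΩcc, h0, mul_zero]))
    exact ⟨(c', t'), ⟨ht', h'⟩, ht't, hsub⟩
  obtain ⟨c₀, t₀, ht₀, -, hsub₀, h₀⟩ :=
    exists_closedBall_subset_measure_eq_half μ hΩ one_pos h₁ h₂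
  choose! F hFP hF using step
  set w : ℕ → E × ℝ := fun n => F^[n] (c₀, t₀)
  have hP : ∀ n, P (w n) := fun n => by
    induction n with
    | zero => exact ⟨ht₀, h₀⟩
    | succ n ih => simp only [w, Function.iterate_succ_apply']; exact hFP _ ih
  have hnext : ∀ n, (w (n + 1)).2 ≤ (w n).2 / 2 ∧
      closedBall (w (n + 1)).1 (w (n + 1)).2 ⊆ ball (w n).1 (w n).2 := fun n => by
    simp only [w, Function.iterate_succ_apply']; exact hF _ (hP n)
  have hrad : ∀ n, (w n).2 ≤ t₀ * 2⁻¹ ^ n := fun n => by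
    induction n with
    | zero => simp [w]
    | succ n ih => rw [pow_succ]; linarith [(hnext n).1]
  obtain ⟨y, hy⟩ := IsCompact.nonempty_iInter_of_sequence_nonempty_isCompact_isClosed
    (fun n => closedBall (w n).1 (w n).2) (fun n => (hnext n).2.trans ball_subset_closedBall)
    (fun n => nonempty_closedBall.2 (hP n).1.le) (isCompact_closedBall _ _)
    (fun _ => isClosed_closedBall)
  rw [mem_iInter] at hy
  have hτ : Tendsto (fun n => 2 * (w n).2) atTop (𝓝 0) := by
    refine squeeze_zero (g := fun n => 2 * (t₀ * 2⁻¹ ^ n)) (fun n => by linarith [(hP n).1])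
      (fun n => by linarith [hrad n]) ?_
    simpa using ((tendsto_pow_atTop_nhds_zero_of_lt_one (r := (2⁻¹ : ℝ)) (by norm_num)
      (by norm_num)).const_mul t₀).const_mul 2
  refine ⟨y, hsub₀ (hy 0), fun n => 2 * (w n).2,
    tendsto_nhdsWithin_iff.2 ⟨hτ, .of_forall fun n => mul_pos two_pos (hP n).1⟩, fun n => ?_⟩
  exact ⟨measure_ball_two_mul_le μ Ω (hy n) (hP n).2.1.le,
    measure_ball_two_mul_le μ Ωᶜ (hy n) (hP n).2.2.le⟩

theorem exists_lt_measure_ball [Nontrivial E] {a : ℝ≥0∞} (ha : a ≠ ∞) :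
    ∃ ρ > 0, ∀ z : E, a < μ (ball z ρ) := by
  have h := tendsto_measure_iUnion_atTop (μ := μ) (s := fun n : ℕ => ball (0 : E) n)
    fun m n hmn => ball_subset_ball (Nat.cast_le.2 hmn)
  rw [iUnion_ball_nat, measure_univ_of_isAddLeftInvariant] at h
  obtain ⟨n, hn, hn₀⟩ :=
    ((h.eventually (lt_mem_nhds ha.lt_top)).and (eventually_gt_atTop 0)).exists
  exact ⟨n, Nat.cast_pos.2 hn₀, fun z => by rwa [Measure.addHaar_ball_center]⟩

end AddHaar

section Euclidean

variable {d : ℕ}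

theorem posUpperDensity_of_tendsto {ω : Set (EuclideanSpace ℝ (Fin d))}
    {x : EuclideanSpace ℝ (Fin d)} {τ : ℕ → ℝ} (hτ : Tendsto τ atTop (𝓝[>] 0)) {K : ℝ≥0∞}
    (hK₀ : K ≠ 0) (hK : K ≠ ∞)
    (h : ∀ n, volume (ball x (τ n)) ≤ K * volume (ω ∩ ball x (τ n))) :
    posUpperDensity ω x := by
  refine (ENNReal.inv_pos.2 hK).trans_le (le_limsup_of_frequently_le' (hτ.frequently ?_))
  refine ((hτ.eventually self_mem_nhdsWithin).mono fun n (hn : 0 < τ n) => ?_).frequently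
  rw [ENNReal.le_div_iff_mul_le (.inl (measure_ball_pos volume x hn).ne')
    (.inl measure_ball_lt_top.ne), ENNReal.inv_mul_le_iff hK₀ hK]
  exact h n

theorem exists_mem_ball_essBoundary {Ω : Set (EuclideanSpace ℝ (Fin d))}
    (hΩ : MeasurableSet Ω) {x : EuclideanSpace ℝ (Fin d)} {s : ℝ} (h₁ : volume (Ω ∩ ball x s) ≠ 0)
    (h₂ : volume (Ωᶜ ∩ ball x s) ≠ 0) : ∃ y ∈ ball x s, y ∈ essBoundary Ω := by
  obtain ⟨y, hy, τ, hτ, h⟩ := exists_mem_ball_seq_two_sided_density_bound volume hΩ h₁ h₂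
  have hK₀ : (2 : ℝ≥0∞) ^ (finrank ℝ (EuclideanSpace ℝ (Fin d)) + 1) ≠ 0 :=
    pow_ne_zero _ two_ne_zero
  have hK : (2 : ℝ≥0∞) ^ (finrank ℝ (EuclideanSpace ℝ (Fin d)) + 1) ≠ ∞ :=
    ENNReal.pow_ne_top ENNReal.ofNat_ne_top
  exact ⟨y, hy, posUpperDensity_of_tendsto hτ hK₀ hK fun n => (h n).1,
    posUpperDensity_of_tendsto hτ hK₀ hK fun n => (h n).2⟩

end Euclidean

/-- An `r`-critical measurable set of finite Lebesgue measure is essentially bounded: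
there is `R > 0` such that `|Ω \ B_R(0)| = 0`. -/
theorem stmt11 {d : ℕ} (r : ℝ) (hr : 0 < r) (Ω : Set (EuclideanSpace ℝ (Fin d)))
    (hmeas : MeasurableSet Ω) (hfin : volume Ω < ⊤)
    (c : ℝ≥0∞) (hc : 0 < c)
    (hcrit : ∀ x ∈ essBoundary Ω, volume (Ω ∩ ball x r) = c) :
    ∃ R : ℝ, 0 < R ∧ volume (Ω \ ball (0 : EuclideanSpace ℝ (Fin d)) R) = 0 := by
  rcases subsingleton_or_nontrivial (EuclideanSpace ℝ (Fin d)) with hE | hE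
  · refine ⟨1, one_pos, ?_⟩
    have huniv : ball (0 : EuclideanSpace ℝ (Fin d)) 1 = univ :=
      eq_univ_of_forall fun z => by rw [Subsingleton.elim z 0]; exact mem_ball_self one_pos
    rw [huniv, sdiff_univ, measure_empty]
  obtain ⟨R, hR, hbdd⟩ := (isBounded_of_le_measure_inter_ball hmeas hfin.ne hr.le hc.ne'
    fun x hx => (hcrit x hx).ge).subset_ball_lt 0 0
  obtain ⟨ρ, hρ, hvol⟩ :=
    exists_lt_measure_ball (volume : Measure (EuclideanSpace ℝ (Fin d))) hfin.ne
  refine ⟨R + ρ, by positivity, ?_⟩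
  by_contra hfar
  obtain ⟨p, hp, hpΩ⟩ := exists_mem_forall_measure_inter_ball_ne_zero
    (μ := volume) (Ω := Ω) (T := (ball 0 (R + ρ))ᶜ) (by rwa [← sdiff_eq])
  have hpΩc : volume (Ωᶜ ∩ ball p ρ) ≠ 0 := fun h0 => (hvol p).not_ge <|
    calc volume (ball p ρ) = volume (Ω ∩ ball p ρ) := by
          rw [← measure_inter_add_compl_inter volume hmeas, h0, add_zero]
      _ ≤ volume Ω := measure_mono inter_subset_left
  obtain ⟨y, hyp, hy⟩ := exists_mem_ball_essBoundary hmeas (hpΩ ρ hρ) hpΩc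
  have hyR := mem_ball_zero_iff.1 (hbdd hy)
  have hpR : R + ρ ≤ ‖p‖ := not_lt.1 fun h => hp (mem_ball_zero_iff.2 h)
  linarith [mem_ball_iff_norm.1 hyp, norm_sub_norm_le p y, norm_sub_rev y p]
end
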